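/- arXiv:1708.04648 — 3 statements merged into one kernel-verified Lean document; each statement's English description precedes it below -/
import Mathlib

section
/- Fix real numbers T > 0 and M > 0. Then for every ε > 0 and all M1, M2 ∈ ℝ there exist λ0 > 0 and C > 0 such that for every λ ≥ λ0, every s ≥ 1 and every t ∈ (0,T): e^{s α*(t)} ≤ C · s^{M1} · λ^{M2} · ξ̂(t)^{M1} · e^{s(1+ε) α̂(t)}. -/
/-- The Carleman weight `α*(t) = (e^{12λM} − e^{10λM})/(t(T−t))⁵`. -/
noncomputable def alphaStar (T M lam t : ℝ) : ℝ :=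
  (Real.exp (12 * lam * M) - Real.exp (10 * lam * M)) / (t * (T - t)) ^ 5

/-- The Carleman weight `α̂(t) = (e^{12λM} − e^{11λM})/(t(T−t))⁵`. -/
noncomputable def alphaHat (T M lam t : ℝ) : ℝ :=
  (Real.exp (12 * lam * M) - Real.exp (11 * lam * M)) / (t * (T - t)) ^ 5

/-- The Carleman weight `ξ̂(t) = e^{11λM}/(t(T−t))⁵`. -/
noncomputable def xiHat (T M lam t : ℝ) : ℝ :=
  Real.exp (11 * lam * M) / (t * (T - t)) ^ 5

/-- `e^z ≥ z²/4` for `z ≥ 0`. -/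
lemma sq_div_four_le_exp {z : ℝ} (hz : 0 ≤ z) : z ^ 2 / 4 ≤ Real.exp z := by
  have h := Real.add_one_le_exp (z / 2)
  have h2 : Real.exp z = Real.exp (z / 2) * Real.exp (z / 2) := by
    rw [← Real.exp_add]; ring_nf
  nlinarith [Real.exp_pos (z / 2)]

/-- `x^n ≤ (2n)^n e^{x/2}` for `x ≥ 0`, `n ≥ 1`. -/
lemma pow_le_exp_half (n : ℕ) (hn : 1 ≤ n) {x : ℝ} (hx : 0 ≤ x) :
    x ^ n ≤ (2 * n) ^ n * Real.exp (x / 2) := by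
  have hn0 : (0:ℝ) < (n:ℝ) := by exact_mod_cast hn
  have h1 : x ≤ 2 * n * Real.exp (x / (2 * n)) := by
    have h := Real.add_one_le_exp (x / (2 * n))
    have hxn : x / (2 * n) ≤ Real.exp (x / (2 * n)) := by
      nlinarith [Real.exp_pos (x / (2 * n))]
    calc x = 2 * n * (x / (2 * n)) := by field_simp
      _ ≤ 2 * n * Real.exp (x / (2 * n)) := by
          apply mul_le_mul_of_nonneg_left hxn; positivity
  calc x ^ n ≤ (2 * n * Real.exp (x / (2 * n))) ^ n := pow_le_pow_left₀ hx h1 n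
    _ = (2 * n) ^ n * (Real.exp (x / (2 * n))) ^ n := mul_pow _ _ _
    _ = (2 * n) ^ n * Real.exp (x / 2) := by
        rw [← Real.exp_nat_mul]
        congr 1
        field_simp

set_option maxHeartbeats 1000000 in
/-- Lemma A.1 of the paper: for any `ε > 0` and `M1, M2 ∈ ℝ` there are `lam0 > 0`
and `C > 0` such that `e^{sα*} ≤ C s^{M1} λ^{M2} ξ̂^{M1} e^{s(1+ε)α̂}` for all
`λ ≥ lam0`, `s ≥ 1`, `t ∈ (0,T)`. -/
theorem weight_relationship (T M : ℝ) (hT : 0 < T) (hM : 0 < M) :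
    ∀ ε > (0 : ℝ), ∀ M1 M2 : ℝ, ∃ lam0 > (0 : ℝ), ∃ C > (0 : ℝ),
      ∀ lam ≥ lam0, ∀ s ≥ (1 : ℝ), ∀ t ∈ Set.Ioo (0 : ℝ) T,
        Real.exp (s * alphaStar T M lam t) ≤
          C * s ^ M1 * lam ^ M2 * (xiHat T M lam t) ^ M1 *
            Real.exp (s * (1 + ε) * alphaHat T M lam t) := by
  intro ε hε M1 M2
  set c : ℝ := (4 / T ^ 2) ^ 5 with hc_def
  have hc : 0 < c := by positivity
  set n : ℕ := ⌈|M1|⌉₊ + 1 with hn_def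
  set m : ℕ := ⌈|M2|⌉₊ + 1 with hm_def
  have hn1 : 1 ≤ n := Nat.le_add_left 1 _
  have hM1n : -M1 ≤ (n : ℝ) := by
    have h1 := Nat.le_ceil |M1|
    have h2 : -M1 ≤ |M1| := neg_le_abs M1
    push_cast [hn_def]
    linarith
  have hM2m : -M2 ≤ (m : ℝ) := by
    have h1 := Nat.le_ceil |M2|
    have h2 : -M2 ≤ |M2| := neg_le_abs M2
    push_cast [hm_def]
    linarith
  refine ⟨max 1 (max (Real.log ((1 + ε) / ε) / M)
      (max (Real.log (2 / c) / (10 * M)) (2 * ((n : ℝ) * M + m) / (25 * c * M ^ 2)))),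
    lt_of_lt_of_le one_pos (le_max_left _ _),
    (2 * (n : ℝ)) ^ n, by positivity, ?_⟩
  intro lam hlam s hs t ht
  obtain ⟨ht0, htT⟩ := ht
  have hs0 : (0:ℝ) < s := lt_of_lt_of_le one_pos hs
  have hlam1 : 1 ≤ lam := le_trans (le_max_left _ _) hlam
  have hlam0 : 0 < lam := lt_of_lt_of_le one_pos hlam1
  have hlamA : Real.log ((1 + ε) / ε) / M ≤ lam :=
    le_trans (le_trans (le_max_left _ _) (le_max_right _ _)) hlam
  have hlamD : Real.log (2 / c) / (10 * M) ≤ lam :=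
    le_trans (le_trans (le_trans (le_max_left _ _) (le_max_right _ _)) (le_max_right _ _)) hlam
  have hlamB : 2 * ((n : ℝ) * M + m) / (25 * c * M ^ 2) ≤ lam :=
    le_trans (le_trans (le_trans (le_max_right _ _) (le_max_right _ _)) (le_max_right _ _)) hlam
  -- basic positivity of ρ = (t(T-t))^5
  have hρ : (0:ℝ) < (t * (T - t)) ^ 5 := by
    have : 0 < t * (T - t) := mul_pos ht0 (by linarith)
    positivity
  -- c ≤ 1/ρ
  have hρc : c ≤ 1 / (t * (T - t)) ^ 5 := by
    have h1 : t * (T - t) ≤ T ^ 2 / 4 := by nlinarith [sq_nonneg (T - 2 * t)]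
    have h0 : 0 ≤ t * (T - t) := le_of_lt (mul_pos ht0 (by linarith))
    have h2 : (t * (T - t)) ^ 5 ≤ (T ^ 2 / 4) ^ 5 := pow_le_pow_left₀ h0 h1 5
    have h3 : 1 / (T ^ 2 / 4) ^ 5 ≤ 1 / (t * (T - t)) ^ 5 :=
      one_div_le_one_div_of_le hρ h2
    have h4 : c = 1 / (T ^ 2 / 4) ^ 5 := by
      rw [hc_def, div_pow, div_pow, one_div_div]
    linarith
  -- consequences of lam ≥ lam0
  have hexpA : 1 + ε ≤ ε * Real.exp (lam * M) := by
    have h1 : Real.log ((1 + ε) / ε) ≤ lam * M := by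
      rw [div_le_iff₀ hM] at hlamA; linarith
    have h2 : (1 + ε) / ε ≤ Real.exp (lam * M) := by
      rw [← Real.exp_log (show (0:ℝ) < (1 + ε) / ε by positivity)]
      exact Real.exp_le_exp.mpr h1
    rw [div_le_iff₀ hε] at h2
    linarith
  have hexpD : 2 / c ≤ Real.exp (10 * lam * M) := by
    have h1 : Real.log (2 / c) ≤ 10 * lam * M := by
      rw [div_le_iff₀ (by positivity : (0:ℝ) < 10 * M)] at hlamD; linarith
    rw [← Real.exp_log (show (0:ℝ) < 2 / c by positivity)]
    exact Real.exp_le_exp.mpr h1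
  have hquad : ((n : ℝ) * M + m) * lam ≤ c / 2 * Real.exp (10 * lam * M) := by
    have h1 : (10 * lam * M) ^ 2 / 4 ≤ Real.exp (10 * lam * M) :=
      sq_div_four_le_exp (by positivity)
    have h2 : 2 * ((n : ℝ) * M + m) ≤ 25 * c * M ^ 2 * lam := by
      rw [div_le_iff₀ (by positivity : (0:ℝ) < 25 * c * M ^ 2)] at hlamB
      linarith
    nlinarith [sq_nonneg lam, mul_pos hlam0 hlam0]
  -- the central quantity x = s ξ*
  set ρ : ℝ := (t * (T - t)) ^ 5 with hρ_def
  set x : ℝ := s * Real.exp (10 * lam * M) / ρ with hx_def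
  have hE10 : (0:ℝ) < Real.exp (10 * lam * M) := Real.exp_pos _
  have hxc : c * Real.exp (10 * lam * M) ≤ x := by
    rw [hx_def]
    calc c * Real.exp (10 * lam * M) ≤ (1 / ρ) * Real.exp (10 * lam * M) :=
          mul_le_mul_of_nonneg_right hρc hE10.le
      _ ≤ (1 / ρ) * Real.exp (10 * lam * M) * s := by
          nlinarith [mul_pos (one_div_pos.mpr hρ) hE10]
      _ = s * Real.exp (10 * lam * M) / ρ := by field_simp
  have hx2 : 2 ≤ x := by
    calc (2:ℝ) = c * (2 / c) := by field_simp
      _ ≤ c * Real.exp (10 * lam * M) := mul_le_mul_of_nonneg_left hexpD hc.le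
      _ ≤ x := hxc
  have hx1 : (1:ℝ) ≤ x := by linarith
  have hx0 : (0:ℝ) < x := by linarith
  -- split e^{12λM} = e^{λM} e^{11λM}
  have hexp_split : Real.exp (12 * lam * M) = Real.exp (lam * M) * Real.exp (11 * lam * M) := by
    rw [← Real.exp_add]; ring_nf
  -- step 1 : s α* - s(1+ε) α̂ ≤ -x
  have hf2 : s * alphaStar T M lam t - s * (1 + ε) * alphaHat T M lam t ≤ -x := by
    rw [alphaStar, alphaHat, ← hρ_def]
    have h1 : (1 + ε) * Real.exp (11 * lam * M) ≤ ε * Real.exp (12 * lam * M) := by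
      rw [hexp_split, ← mul_assoc]
      exact mul_le_mul_of_nonneg_right hexpA (Real.exp_pos _).le
    have h3 : s * ((1 + ε) * Real.exp (11 * lam * M) - ε * Real.exp (12 * lam * M)) ≤ 0 :=
      mul_nonpos_of_nonneg_of_nonpos hs0.le (by linarith)
    have key : s * (Real.exp (12 * lam * M) - Real.exp (10 * lam * M)) -
        s * (1 + ε) * (Real.exp (12 * lam * M) - Real.exp (11 * lam * M)) ≤
        -(s * Real.exp (10 * lam * M)) := by nlinarith [h3]
    calc s * ((Real.exp (12 * lam * M) - Real.exp (10 * lam * M)) / ρ) -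
        s * (1 + ε) * ((Real.exp (12 * lam * M) - Real.exp (11 * lam * M)) / ρ)
        = (s * (Real.exp (12 * lam * M) - Real.exp (10 * lam * M)) -
            s * (1 + ε) * (Real.exp (12 * lam * M) - Real.exp (11 * lam * M))) / ρ := by ring
      _ ≤ (-(s * Real.exp (10 * lam * M))) / ρ := by
          exact div_le_div_of_nonneg_right key hρ.le
      _ = -x := by rw [hx_def]; ring
  -- y = s ξ̂ = x e^{λM}
  have hξpos : 0 < xiHat T M lam t := by rw [xiHat, ← hρ_def]; positivity
  have hy : s * xiHat T M lam t = x * Real.exp (lam * M) := by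
    have h11 : Real.exp (11 * lam * M) = Real.exp (10 * lam * M) * Real.exp (lam * M) := by
      rw [← Real.exp_add]; ring_nf
    rw [xiHat, ← hρ_def, hx_def, h11]; ring
  have hy0 : 0 < s * xiHat T M lam t := mul_pos hs0 hξpos
  -- step 2 : (s ξ̂)^{-M1} λ^{-M2} ≤ (2n)^n e^x
  have h_y : (s * xiHat T M lam t) ^ (-M1) ≤ x ^ (n : ℝ) * Real.exp ((n : ℝ) * (lam * M)) := by
    rw [hy, Real.mul_rpow hx0.le (Real.exp_pos _).le]
    apply mul_le_mul (Real.rpow_le_rpow_of_exponent_le hx1 hM1n)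
    · rw [← Real.exp_mul]
      apply Real.exp_le_exp.mpr
      nlinarith [mul_pos hlam0 hM]
    · positivity
    · positivity
  have h_lam : lam ^ (-M2) ≤ Real.exp ((m : ℝ) * lam) := by
    have hle : lam ≤ Real.exp lam := by
      have := Real.add_one_le_exp lam; linarith
    calc lam ^ (-M2) ≤ lam ^ ((m : ℝ)) := Real.rpow_le_rpow_of_exponent_le hlam1 hM2m
      _ = lam ^ m := Real.rpow_natCast lam m
      _ ≤ (Real.exp lam) ^ m := pow_le_pow_left₀ hlam0.le hle m
      _ = Real.exp ((m : ℝ) * lam) := (Real.exp_nat_mul lam m).symm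
  have h_exps : Real.exp ((n : ℝ) * (lam * M)) * Real.exp ((m : ℝ) * lam) ≤
      Real.exp (x / 2) := by
    rw [← Real.exp_add]
    apply Real.exp_le_exp.mpr
    have heq : (n : ℝ) * (lam * M) + (m : ℝ) * lam = ((n : ℝ) * M + m) * lam := by ring
    rw [heq]
    linarith [hquad, hxc]
  have hbig : (s * xiHat T M lam t) ^ (-M1) * lam ^ (-M2) ≤
      (2 * (n : ℝ)) ^ n * Real.exp x := by
    calc (s * xiHat T M lam t) ^ (-M1) * lam ^ (-M2)
        ≤ (x ^ (n : ℝ) * Real.exp ((n : ℝ) * (lam * M))) * Real.exp ((m : ℝ) * lam) := by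
          apply mul_le_mul h_y h_lam (by positivity) (by positivity)
      _ = x ^ n * (Real.exp ((n : ℝ) * (lam * M)) * Real.exp ((m : ℝ) * lam)) := by
          rw [Real.rpow_natCast]; ring
      _ ≤ ((2 * (n : ℝ)) ^ n * Real.exp (x / 2)) * Real.exp (x / 2) := by
          apply mul_le_mul (pow_le_exp_half n hn1 hx0.le) h_exps (by positivity) (by positivity)
      _ = (2 * (n : ℝ)) ^ n * Real.exp x := by
          rw [mul_assoc, ← Real.exp_add]; norm_num
  -- step 3 : e^{-x} ≤ (2n)^n (s ξ̂)^{M1} λ^{M2}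
  have hP : 0 < (s * xiHat T M lam t) ^ M1 * lam ^ M2 := by
    apply mul_pos (Real.rpow_pos_of_pos hy0 _) (Real.rpow_pos_of_pos hlam0 _)
  have hkey : Real.exp (-x) ≤
      (2 * (n : ℝ)) ^ n * ((s * xiHat T M lam t) ^ M1 * lam ^ M2) := by
    have hPinv : (s * xiHat T M lam t) ^ (-M1) * lam ^ (-M2) =
        ((s * xiHat T M lam t) ^ M1 * lam ^ M2)⁻¹ := by
      rw [Real.rpow_neg hy0.le, Real.rpow_neg hlam0.le, mul_inv]
    rw [hPinv] at hbig
    set P := (s * xiHat T M lam t) ^ M1 * lam ^ M2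
    calc Real.exp (-x) = P⁻¹ * (P / Real.exp x) := by
          rw [Real.exp_neg]; field_simp
      _ ≤ ((2 * (n : ℝ)) ^ n * Real.exp x) * (P / Real.exp x) :=
          mul_le_mul_of_nonneg_right hbig (by positivity)
      _ = (2 * (n : ℝ)) ^ n * P := by
          field_simp
  -- conclusion
  have hsplit : (s * xiHat T M lam t) ^ M1 = s ^ M1 * (xiHat T M lam t) ^ M1 :=
    Real.mul_rpow hs0.le hξpos.le
  calc Real.exp (s * alphaStar T M lam t)
      = Real.exp (s * alphaStar T M lam t - s * (1 + ε) * alphaHat T M lam t) *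
        Real.exp (s * (1 + ε) * alphaHat T M lam t) := by
        rw [← Real.exp_add]; ring_nf
    _ ≤ Real.exp (-x) * Real.exp (s * (1 + ε) * alphaHat T M lam t) :=
        mul_le_mul_of_nonneg_right (Real.exp_le_exp.mpr hf2) (Real.exp_pos _).le
    _ ≤ ((2 * (n : ℝ)) ^ n * ((s * xiHat T M lam t) ^ M1 * lam ^ M2)) *
        Real.exp (s * (1 + ε) * alphaHat T M lam t) :=
        mul_le_mul_of_nonneg_right hkey (Real.exp_pos _).le
    _ = (2 * (n : ℝ)) ^ n * s ^ M1 * lam ^ M2 * (xiHat T M lam t) ^ M1 *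
        Real.exp (s * (1 + ε) * alphaHat T M lam t) := by
        rw [hsplit]; ring
end

section
/- Fix real numbers T > 0 and M > 0, and fix constants a0 ≥ 2 and m0 with a0 < m0 < a0 + 2. Then for all M̃1, M̃2 ∈ ℝ there exist λ0 > 0 and C > 0 such that for every λ ≥ λ0, every s ≥ 1 and every t ∈ (0,T): s^{M̃1} · λ^{M̃2} · e^{−4 s α̂(t) − 2 a0 s α*(t)} · ξ̂(t)^{M̃1} ≤ C · s^{−1} · e^{−2 m0 s α*(t)} · ξ̂(t)^{−1}. -/
/-!
With `x = s ξ̂(t)`, the claim amounts to `x^{M̃1+1} λ^{M̃2} e^{−4sα̂ + 2(m0−a0)sα*} ≤ C`.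
Since `α̂`, `α*` and `ξ̂` share the denominator `(t(T−t))⁵`, the exponent is at most `−4x` as
soon as `(4 − 2(m0 − a0)) e^{λM} ≥ 8`, which `m0 < a0 + 2` makes true for large `λ`.
Moreover `ξ̂ ≥ 11Mλ / (T²/4)⁵`, so `λ` is at most a multiple of `x`, and the polynomial factor
`x^{M̃1+1} λ^{M̃2}` is absorbed by `e^{x} ≤ e^{4x}`.
-/

open Real Set

lemma rpow_mul_rpow_le_factorial_mul_exp {x y c a b : ℝ} (hc : 0 < c) (hx : 1 ≤ x)
    (hy : 1 ≤ y) (hyx : c * y ≤ x) :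
    x ^ a * y ^ b ≤ (⌈a⌉₊ + ⌈b⌉₊).factorial / c ^ ⌈b⌉₊ * exp x := by
  set n := ⌈a⌉₊
  set m := ⌈b⌉₊
  have hxa : x ^ a ≤ x ^ n := by
    simpa only [rpow_natCast] using rpow_le_rpow_of_exponent_le hx (Nat.le_ceil a)
  have hyb : y ^ b ≤ y ^ m := by
    simpa only [rpow_natCast] using rpow_le_rpow_of_exponent_le hy (Nat.le_ceil b)
  have hyx' : y ≤ x / c := (le_div_iff₀' hc).mpr hyx
  have hexp : x ^ (n + m) ≤ (n + m).factorial * exp x :=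
    (div_le_iff₀' (by positivity)).mp (pow_div_factorial_le_exp x (by linarith) _)
  calc x ^ a * y ^ b ≤ x ^ n * y ^ m := mul_le_mul hxa hyb (by positivity) (by positivity)
    _ ≤ x ^ n * (x / c) ^ m := by gcongr
    _ = x ^ (n + m) / c ^ m := by rw [div_pow, pow_add]; ring
    _ ≤ (n + m).factorial * exp x / c ^ m := by gcongr
    _ = _ := by ring

lemma rpow_mul_exp_mul_rpow_le {s ξ y a b G θ C : ℝ} (hs : 0 < s) (hξ : 0 < ξ)
    (h : (s * ξ) ^ (a + 1) * y ^ b * exp (G + θ) ≤ C) :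
    s ^ a * y ^ b * exp G * ξ ^ a ≤ C * s ^ (-1 : ℝ) * exp (-θ) * ξ ^ (-1 : ℝ) := by
  have hsξ := mul_pos hs hξ
  calc s ^ a * y ^ b * exp G * ξ ^ a
      = (s * ξ) ^ (a + 1) * y ^ b * exp (G + θ) * ((s * ξ) ^ (-1 : ℝ) * exp (-θ)) := by
        rw [rpow_add hsξ, rpow_one, rpow_neg_one, exp_add, exp_neg, mul_rpow hs.le hξ.le]
        field_simp
    _ ≤ C * ((s * ξ) ^ (-1 : ℝ) * exp (-θ)) := by gcongr
    _ = C * s ^ (-1 : ℝ) * exp (-θ) * ξ ^ (-1 : ℝ) := by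
        rw [mul_rpow hs.le hξ.le]
        ring

section CarlemanWeights

variable {T M lam t : ℝ}

lemma mul_sub_pow_five_pos (ht : t ∈ Ioo 0 T) : 0 < (t * (T - t)) ^ 5 :=
  pow_pos (mul_pos ht.1 (sub_pos.mpr ht.2)) 5

lemma mul_sub_pow_five_le (ht : t ∈ Ioo 0 T) : (t * (T - t)) ^ 5 ≤ (T ^ 2 / 4) ^ 5 :=
  pow_le_pow_left₀ (mul_pos ht.1 (sub_pos.mpr ht.2)).le (by nlinarith [sq_nonneg (2 * t - T)]) 5

lemma xiHat_pos (ht : t ∈ Ioo 0 T) : 0 < xiHat T M lam t :=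
  div_pos (exp_pos _) (mul_sub_pow_five_pos ht)

lemma mul_le_xiHat (ht : t ∈ Ioo 0 T) : 11 * M / (T ^ 2 / 4) ^ 5 * lam ≤ xiHat T M lam t :=
  calc 11 * M / (T ^ 2 / 4) ^ 5 * lam = 11 * lam * M / (T ^ 2 / 4) ^ 5 := by ring
    _ ≤ exp (11 * lam * M) / (T ^ 2 / 4) ^ 5 := by
        gcongr; linarith [add_one_le_exp (11 * lam * M)]
    _ ≤ xiHat T M lam t :=
        div_le_div_of_nonneg_left (exp_pos _).le (mul_sub_pow_five_pos ht)
          (mul_sub_pow_five_le ht)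

lemma exponent_le_neg_four_mul_xiHat {s a0 m0 : ℝ} (hs : 0 ≤ s) (ht : t ∈ Ioo 0 T)
    (hm0 : a0 ≤ m0) (hlam : 8 ≤ (4 - 2 * (m0 - a0)) * exp (lam * M)) :
    -4 * s * alphaHat T M lam t - 2 * a0 * s * alphaStar T M lam t
        + 2 * m0 * s * alphaStar T M lam t ≤ -4 * (s * xiHat T M lam t) := by
  have hP := mul_sub_pow_five_pos ht
  have h12 : exp (12 * lam * M) = exp (lam * M) * exp (11 * lam * M) := by
    rw [← exp_add]; ring_nf
  have hnum : -(4 - 2 * (m0 - a0)) * exp (12 * lam * M) + 8 * exp (11 * lam * M)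
      - 2 * (m0 - a0) * exp (10 * lam * M) ≤ 0 := by
    rw [h12]
    nlinarith [exp_pos (11 * lam * M), exp_pos (10 * lam * M)]
  rw [← sub_nonpos]
  have hdiff : -4 * s * alphaHat T M lam t - 2 * a0 * s * alphaStar T M lam t
        + 2 * m0 * s * alphaStar T M lam t - -4 * (s * xiHat T M lam t)
      = s * (-(4 - 2 * (m0 - a0)) * exp (12 * lam * M) + 8 * exp (11 * lam * M)
          - 2 * (m0 - a0) * exp (10 * lam * M)) / (t * (T - t)) ^ 5 := by
    unfold alphaHat alphaStar xiHat
    field_simp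
    ring
  rw [hdiff]
  exact div_nonpos_of_nonpos_of_nonneg (mul_nonpos_of_nonneg_of_nonpos hs hnum) hP.le

lemma eight_le_mul_exp {ε : ℝ} (hε : ε < 2) (hM : 0 < M)
    (hlam : log (8 / (4 - 2 * ε)) / M ≤ lam) : 8 ≤ (4 - 2 * ε) * exp (lam * M) := by
  rw [← div_le_iff₀' (by linarith), ← log_le_iff_le_exp (div_pos (by norm_num) (by linarith))]
  exact (div_le_iff₀ hM).mp hlam

end CarlemanWeights

theorem weight_comparison_lemmaA2_general (T M : ℝ) (hT : 0 < T) (hM : 0 < M)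
    (a0 m0 : ℝ) (hm0 : a0 < m0) (hm0' : m0 < a0 + 2) :
    ∀ M1 M2 : ℝ, ∃ lam0 > (0 : ℝ), ∃ C > (0 : ℝ),
      ∀ lam ≥ lam0, ∀ s ≥ (1 : ℝ), ∀ t ∈ Set.Ioo (0 : ℝ) T,
        s ^ M1 * lam ^ M2 *
            Real.exp (-4 * s * alphaHat T M lam t - 2 * a0 * s * alphaStar T M lam t) *
            (xiHat T M lam t) ^ M1 ≤
          C * s ^ (-1 : ℝ) * Real.exp (-2 * m0 * s * alphaStar T M lam t) *
            (xiHat T M lam t) ^ (-1 : ℝ) := by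
  intro M1 M2
  set c := 11 * M / (T ^ 2 / 4) ^ 5
  have hc : 0 < c := by positivity
  refine ⟨max (max 1 c⁻¹) (log (8 / (4 - 2 * (m0 - a0))) / M), by positivity,
    (⌈M1 + 1⌉₊ + ⌈M2⌉₊).factorial / c ^ ⌈M2⌉₊, by positivity, ?_⟩
  intro lam hlam s hs t ht
  simp only [ge_iff_le, max_le_iff] at hlam
  obtain ⟨⟨hlam1, hlamc⟩, hlamq⟩ := hlam
  have hxi := xiHat_pos (M := M) (lam := lam) ht
  set x := s * xiHat T M lam t
  have hcx : c * lam ≤ x := (mul_le_xiHat ht).trans (le_mul_of_one_le_left hxi.le hs)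
  have hx1 : 1 ≤ x := (inv_le_iff_one_le_mul₀' hc).mp hlamc |>.trans hcx
  have hG := exponent_le_neg_four_mul_xiHat (s := s) (by linarith) ht hm0.le
    (eight_le_mul_exp (by linarith) hM hlamq)
  have hpoly := rpow_mul_rpow_le_factorial_mul_exp (a := M1 + 1) (b := M2) hc hx1 hlam1 hcx
  set C := ((⌈M1 + 1⌉₊ + ⌈M2⌉₊).factorial : ℝ) / c ^ ⌈M2⌉₊
  rw [show -2 * m0 * s * alphaStar T M lam t = -(2 * m0 * s * alphaStar T M lam t) by ring]
  refine rpow_mul_exp_mul_rpow_le (by linarith) hxi ?_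
  calc x ^ (M1 + 1) * lam ^ M2
        * exp (-4 * s * alphaHat T M lam t - 2 * a0 * s * alphaStar T M lam t
          + 2 * m0 * s * alphaStar T M lam t)
      ≤ C * exp x * exp (-4 * x) := by gcongr
    _ = C * exp (-(3 * x)) := by rw [mul_assoc, ← exp_add]; ring_nf
    _ ≤ C := mul_le_of_le_one_right (by positivity) (exp_le_one_iff.mpr (by linarith))

/-- Lemma A.2 of the paper (pointwise weight comparison): for `a0 ≥ 2` and
`a0 < m0 < a0 + 2`, the weight `s^{M̃1} λ^{M̃2} e^{−4sα̂ − 2a0 sα*} ξ̂^{M̃1}` is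
dominated by `C s^{−1} e^{−2m0 sα*} ξ̂^{−1}`. -/
theorem weight_comparison_lemmaA2 (T M : ℝ) (hT : 0 < T) (hM : 0 < M)
    (a0 m0 : ℝ) (ha0 : 2 ≤ a0) (hm0 : a0 < m0) (hm0' : m0 < a0 + 2) :
    ∀ M1 M2 : ℝ, ∃ lam0 > (0 : ℝ), ∃ C > (0 : ℝ),
      ∀ lam ≥ lam0, ∀ s ≥ (1 : ℝ), ∀ t ∈ Set.Ioo (0 : ℝ) T,
        s ^ M1 * lam ^ M2 *
            Real.exp (-4 * s * alphaHat T M lam t - 2 * a0 * s * alphaStar T M lam t) *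
            (xiHat T M lam t) ^ M1 ≤
          C * s ^ (-1 : ℝ) * Real.exp (-2 * m0 * s * alphaStar T M lam t) *
            (xiHat T M lam t) ^ (-1 : ℝ) :=
  weight_comparison_lemmaA2_general T M hT hM a0 m0 hm0 hm0'
end

section
/- Fix real numbers T > 0 and M > 0, and fix constants a0 and m0 with 5/4 ≤ a0 and a0 + 1 < m0. Then there exist λ0 > 0 and C > 0 such that for every λ ≥ λ0, every s ≥ 1 and every t ∈ (0,T): s^{16} · λ^{40} · e^{−8 m0 s α̂(t) + 6 m0 s α*(t)} · ξ̂(t)^{16} ≤ C · s^{15} · λ^{24} · e^{2(m0 − 2) s α*(t) − 4 a0 s α*(t)} · ξ̂(t)^{15}. -/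
set_option maxHeartbeats 1000000 in
/-- The weight comparison (c.end.proof) of the paper: for `5/4 ≤ a0` and
`a0 + 1 < m0`, one has
`s^{16} λ^{40} e^{−8m0 sα̂ + 6m0 sα*} ξ̂^{16} ≤ C s^{15} λ^{24} e^{2(m0−2)sα* − 4a0 sα*} ξ̂^{15}`. -/
theorem weight_comparison_end_proof (T M : ℝ) (hT : 0 < T) (hM : 0 < M)
    (a0 m0 : ℝ) (ha0 : 5 / 4 ≤ a0) (hm0 : a0 + 1 < m0) :
    ∃ lam0 > (0 : ℝ), ∃ C > (0 : ℝ),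
      ∀ lam ≥ lam0, ∀ s ≥ (1 : ℝ), ∀ t ∈ Set.Ioo (0 : ℝ) T,
        s ^ 16 * lam ^ 40 *
            Real.exp (-8 * m0 * s * alphaHat T M lam t +
              6 * m0 * s * alphaStar T M lam t) * (xiHat T M lam t) ^ 16 ≤
          C * s ^ 15 * lam ^ 24 *
            Real.exp (2 * (m0 - 2) * s * alphaStar T M lam t -
              4 * a0 * s * alphaStar T M lam t) * (xiHat T M lam t) ^ 15 := by
  have hδ : 0 < 4 * m0 - 4 - 4 * a0 := by linarith
  have hm0pos : 0 < m0 := by linarith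
  have ha0pos : 0 < a0 := by linarith
  refine ⟨1 + (8 * m0 + 2) / ((4 * m0 - 4 - 4 * a0) * M)
      + 17 ^ 17 * T ^ 10 / (4 ^ 5 * (11 * M) ^ 17), by positivity, 1, one_pos, ?_⟩
  intro lam hlam s hs t ht
  obtain ⟨ht0, htT⟩ := ht
  have htT' : 0 < T - t := by linarith
  have hterm1 : 0 ≤ (8 * m0 + 2) / ((4 * m0 - 4 - 4 * a0) * M) := by positivity
  have hterm2 : 0 ≤ 17 ^ 17 * T ^ 10 / (4 ^ 5 * (11 * M) ^ 17) := by positivity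
  have hlam1 : (1 : ℝ) ≤ lam := by linarith
  have hlampos : 0 < lam := by linarith
  have hs0 : (0 : ℝ) < s := by linarith
  have hDpos : 0 < (t * (T - t)) ^ 5 := by positivity
  have hDle : (t * (T - t)) ^ 5 ≤ T ^ 10 / 4 ^ 5 := by
    have h1 : t * (T - t) ≤ T ^ 2 / 4 := by nlinarith [sq_nonneg (t - (T - t))]
    calc (t * (T - t)) ^ 5 ≤ (T ^ 2 / 4) ^ 5 :=
          pow_le_pow_left₀ (by positivity) h1 5
      _ = T ^ 10 / 4 ^ 5 := by ring
  -- condition 1 : (8m0+2) e^{11λM} ≤ δ e^{12λM}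
  have hc1 : 8 * m0 + 2 ≤ (4 * m0 - 4 - 4 * a0) * Real.exp (lam * M) := by
    have hl : (8 * m0 + 2) / ((4 * m0 - 4 - 4 * a0) * M) ≤ lam := by linarith
    have h2 : (8 * m0 + 2) ≤ (4 * m0 - 4 - 4 * a0) * M * lam := by
      rw [div_le_iff₀ (by positivity)] at hl; linarith
    have h3 := Real.add_one_le_exp (lam * M)
    nlinarith
  have h1 : (8 * m0 + 2) * Real.exp (11 * lam * M)
      ≤ (4 * m0 - 4 - 4 * a0) * Real.exp (12 * lam * M) := by
    have he : Real.exp (12 * lam * M) = Real.exp (11 * lam * M) * Real.exp (lam * M) := by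
      rw [← Real.exp_add]; ring_nf
    rw [he]
    nlinarith [Real.exp_pos (11 * lam * M)]
  -- condition 2 : λ^16 * T^10/4^5 ≤ e^{11λM}
  have h2 : lam ^ 16 * (T ^ 10 / 4 ^ 5) ≤ Real.exp (11 * lam * M) := by
    have hstep : 11 * lam * M / 17 ≤ Real.exp (11 * lam * M / 17) := by
      linarith [Real.add_one_le_exp (11 * lam * M / 17)]
    have hpow : (11 * lam * M / 17) ^ 17 ≤ Real.exp (11 * lam * M) := by
      calc (11 * lam * M / 17) ^ 17 ≤ (Real.exp (11 * lam * M / 17)) ^ 17 :=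
            pow_le_pow_left₀ (by positivity) hstep 17
        _ = Real.exp ((17 : ℕ) * (11 * lam * M / 17)) := by
            rw [← Real.exp_nat_mul]
        _ = Real.exp (11 * lam * M) := by push_cast; ring_nf
    have hl : 17 ^ 17 * T ^ 10 / (4 ^ 5 * (11 * M) ^ 17) ≤ lam := by linarith
    have hmul : 17 ^ 17 * T ^ 10 ≤ lam * (4 ^ 5 * (11 * M) ^ 17) := by
      rwa [div_le_iff₀ (by positivity)] at hl
    have key2 : lam ^ 16 * (T ^ 10 / 4 ^ 5) ≤ (11 * lam * M / 17) ^ 17 := by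
      rw [div_pow, le_div_iff₀ (by positivity : (0 : ℝ) < (17 : ℝ) ^ 17)]
      calc lam ^ 16 * (T ^ 10 / 4 ^ 5) * 17 ^ 17
          = (17 ^ 17 * T ^ 10) * lam ^ 16 / 4 ^ 5 := by ring
        _ ≤ (lam * (4 ^ 5 * (11 * M) ^ 17)) * lam ^ 16 / 4 ^ 5 := by gcongr
        _ = (11 * lam * M) ^ 17 := by ring
    linarith
  set ξ := xiHat T M lam t with hξdef
  have hξ : 0 < ξ := by
    rw [hξdef, xiHat]; positivity
  have hξ_lb : lam ^ 16 ≤ ξ := by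
    rw [hξdef, xiHat]
    rw [le_div_iff₀ hDpos]
    calc lam ^ 16 * (t * (T - t)) ^ 5 ≤ lam ^ 16 * (T ^ 10 / 4 ^ 5) := by
          gcongr
      _ ≤ Real.exp (11 * lam * M) := h2
  -- the gap inequality
  have hgap : (-8 * m0 * s * alphaHat T M lam t + 6 * m0 * s * alphaStar T M lam t)
      - (2 * (m0 - 2) * s * alphaStar T M lam t - 4 * a0 * s * alphaStar T M lam t)
      ≤ -(2 * (s * ξ)) := by
    have heq : (-8 * m0 * s * alphaHat T M lam t + 6 * m0 * s * alphaStar T M lam t)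
        - (2 * (m0 - 2) * s * alphaStar T M lam t - 4 * a0 * s * alphaStar T M lam t)
        = (s * (-8 * m0 * (Real.exp (12 * lam * M) - Real.exp (11 * lam * M))
            + (4 * m0 + 4 + 4 * a0) * (Real.exp (12 * lam * M) - Real.exp (10 * lam * M))))
          / (t * (T - t)) ^ 5 := by
      rw [alphaHat, alphaStar]; ring
    have heq2 : -(2 * (s * ξ)) = (-(2 * s * Real.exp (11 * lam * M))) / (t * (T - t)) ^ 5 := by
      rw [hξdef, xiHat]; ring
    rw [heq, heq2, div_le_div_iff_of_pos_right hDpos]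
    have hN : -8 * m0 * (Real.exp (12 * lam * M) - Real.exp (11 * lam * M))
        + (4 * m0 + 4 + 4 * a0) * (Real.exp (12 * lam * M) - Real.exp (10 * lam * M))
        + 2 * Real.exp (11 * lam * M) ≤ 0 := by
      nlinarith [Real.exp_pos (10 * lam * M)]
    calc s * (-8 * m0 * (Real.exp (12 * lam * M) - Real.exp (11 * lam * M))
        + (4 * m0 + 4 + 4 * a0) * (Real.exp (12 * lam * M) - Real.exp (10 * lam * M)))
        ≤ s * (-(2 * Real.exp (11 * lam * M))) :=
          mul_le_mul_of_nonneg_left (by linarith) hs0.le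
      _ = -(2 * s * Real.exp (11 * lam * M)) := by ring
  -- the key scalar bound
  have hex : s * ξ ≤ Real.exp (s * ξ) := by
    linarith [Real.add_one_le_exp (s * ξ)]
  have e1 : s * ξ * Real.exp (-(s * ξ)) ≤ 1 := by
    rw [Real.exp_neg, ← div_eq_mul_inv, div_le_one (Real.exp_pos _)]
    exact hex
  have e2 : lam ^ 16 * Real.exp (-(s * ξ)) ≤ 1 := by
    rw [Real.exp_neg, ← div_eq_mul_inv, div_le_one (Real.exp_pos _)]
    calc lam ^ 16 ≤ ξ := hξ_lb
      _ ≤ s * ξ := le_mul_of_one_le_left hξ.le hs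
      _ ≤ _ := hex
  set A := -8 * m0 * s * alphaHat T M lam t + 6 * m0 * s * alphaStar T M lam t with hA
  set B := 2 * (m0 - 2) * s * alphaStar T M lam t - 4 * a0 * s * alphaStar T M lam t with hB
  have key : s * lam ^ 16 * ξ * Real.exp (A - B) ≤ 1 := by
    have h3 : Real.exp (A - B) ≤ Real.exp (-(s * ξ)) * Real.exp (-(s * ξ)) := by
      rw [← Real.exp_add]
      apply Real.exp_le_exp.mpr
      linarith [hgap]
    calc s * lam ^ 16 * ξ * Real.exp (A - B)
        ≤ s * lam ^ 16 * ξ * (Real.exp (-(s * ξ)) * Real.exp (-(s * ξ))) := by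
          apply mul_le_mul_of_nonneg_left h3
          positivity
      _ = (s * ξ * Real.exp (-(s * ξ))) * (lam ^ 16 * Real.exp (-(s * ξ))) := by ring
      _ ≤ 1 * 1 := mul_le_mul e1 e2 (by positivity) zero_le_one
      _ = 1 := by ring
  have hexpsplit : Real.exp A = Real.exp B * Real.exp (A - B) := by
    rw [← Real.exp_add]; ring_nf
  have hnn : 0 ≤ s ^ 15 * lam ^ 24 * Real.exp B * ξ ^ 15 := by positivity
  calc s ^ 16 * lam ^ 40 * Real.exp A * ξ ^ 16
      = (s ^ 15 * lam ^ 24 * Real.exp B * ξ ^ 15) * (s * lam ^ 16 * ξ * Real.exp (A - B)) := by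
        rw [hexpsplit]; ring
    _ ≤ (s ^ 15 * lam ^ 24 * Real.exp B * ξ ^ 15) * 1 :=
        mul_le_mul_of_nonneg_left key hnn
    _ = 1 * s ^ 15 * lam ^ 24 * Real.exp B * ξ ^ 15 := by ring
end
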